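/- Let d ≥ 2, let s be a positive integer, β > −d−s, λ_0,…,λ_{s−1} > 0, and assume given the orthonormal spanning families (Y_ℓ^m) of solid harmonics. Let f : ℝ^d × ℝ → ℝ be s-times continuously differentiable. Then for every integer n ≥ s and all (x,t) ∈ ℝ^d × ℝ: ∂_t^s [proj_n^{β,−s} f](x,t) = [proj_{n−s}^{β+s,0}(∂_t^s f)](x,t). -/

import Mathlib

open MeasureTheory Finset

noncomputable section

/-- Pochhammer symbol `(x)_k`. -/
def poch (x : ℝ) (k : ℕ) : ℝ := (ascPochhammer ℝ k).eval x

/-- Jacobi polynomial `P_n^{(a,b)}` for real parameters. -/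
def jacobiP (a b : ℝ) (n : ℕ) (t : ℝ) : ℝ :=
  (poch (a + 1) n / (n.factorial : ℝ)) *
    ∑ k ∈ Finset.range (n + 1),
      poch (-(n : ℝ)) k * poch ((n : ℝ) + a + b + 1) k /
        ((k.factorial : ℝ) * poch (a + 1) k) * ((1 - t) / 2) ^ k

/-- Normalizing constant `A_n^{(a,b)}`. -/
def jacobiA (a b : ℝ) (n : ℕ) : ℝ := 2 ^ n / poch ((n : ℝ) + a + b + 1) n

/-- Normalized Jacobi polynomial `P̂_n^{(a,b)}`. -/
def jacobiPhat (a b : ℝ) (n : ℕ) (t : ℝ) : ℝ := jacobiA a b n * jacobiP a b n t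

/-- The polynomials `J_n^{(a-s,b-s)}` (defined from the parameters `a, b > -1`). -/
def jacobiJ (a b : ℝ) (s n : ℕ) (t : ℝ) : ℝ :=
  if n < s then (1 + t) ^ n / (n.factorial : ℝ)
  else ∫ u in (-1 : ℝ)..t, (t - u) ^ (s - 1) / ((s - 1).factorial : ℝ) * jacobiPhat a b (n - s) u

/-- Normalization constant `c_{a,b}`. -/
def cconst (a b : ℝ) : ℝ := Real.Gamma (a + b + 2) / (Real.Gamma (a + 1) * Real.Gamma (b + 1))

/-- Norm square `h_n^{(a,b)}`. -/
def hJac (a b : ℝ) (n : ℕ) : ℝ :=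
  poch (a + 1) n * poch (b + 1) n * (a + b + n + 1) /
    ((n.factorial : ℝ) * poch (a + b + 2) n * (a + b + 2 * n + 1))

/-- Norm square `ĥ_n^{(a,b)}`. -/
def hHat (a b : ℝ) (n : ℕ) : ℝ := 2 ^ (a + b + 1) / cconst a b * (jacobiA a b n) ^ 2 * hJac a b n

/-- The polynomials `J_n^{(a,-s)}`, built from `P̂^{(a+s,0)}`. -/
def jacobiJneg (a : ℝ) (s n : ℕ) (t : ℝ) : ℝ := jacobiJ (a + s) 0 s n t

/-- Euclidean space `ℝ^d`. -/
abbrev Euc (d : ℕ) : Type := EuclideanSpace ℝ (Fin d)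

/-- The surface measure on the unit sphere `S^{d-1} ⊂ ℝ^d`. -/
def sphMeasure (d : ℕ) : Measure (Metric.sphere (0 : Euc d) 1) :=
  (volume : Measure (Euc d)).toSphere

/-- Surface area `ω_d` of the unit sphere. -/
def omegaS (d : ℕ) : ℝ := (sphMeasure d Set.univ).toReal

/-- Integral over the sphere of a function defined on `ℝ^d`. -/
def sphInt (d : ℕ) (g : Euc d → ℝ) : ℝ := ∫ ξ, g (ξ : Euc d) ∂(sphMeasure d)

/-- The conic surface `V_0^{d+1} = {(x,t) : ‖x‖ = t, 0 ≤ t ≤ 1}` as a subset of `ℝ^d × ℝ`. -/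
def coneSet (d : ℕ) : Set (Euc d × ℝ) := {p | ‖p.1‖ = p.2 ∧ 0 ≤ p.2 ∧ p.2 ≤ 1}

/-- The integral `∫_{V_0^{d+1}} f dm`. -/
def coneInt (d : ℕ) (f : Euc d × ℝ → ℝ) : ℝ :=
  ∫ t in (0 : ℝ)..1, t ^ (d - 1) * sphInt d (fun ξ => f (t • ξ, t))

/-- `∂_t^k f`: the `k`-th partial derivative in the last variable `t`, with `x` fixed. -/
def pdT (k : ℕ) (f : Euc d × ℝ → ℝ) : Euc d × ℝ → ℝ :=
  fun p => iteratedDeriv k (fun τ => f (p.1, τ)) p.2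

/-- A solid harmonic of degree `m` on `ℝ^d`: a homogeneous polynomial annihilated by the
Laplacian. -/
def IsSolidHarmonic (d m : ℕ) (Y : Euc d → ℝ) : Prop :=
  ∃ q : MvPolynomial (Fin d) ℝ, q.IsHomogeneous m ∧
    (∑ i : Fin d, MvPolynomial.pderiv i (MvPolynomial.pderiv i q)) = 0 ∧
    ∀ x : Euc d, Y x = MvPolynomial.eval (fun i => x i) q

/-- The ordinary inner product `⟨f,g⟩_{β,γ}` on the conic surface. -/
def coneInner (d : ℕ) (β γ : ℝ) (f g : Euc d × ℝ → ℝ) : ℝ :=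
  cconst (β + d - 1) γ / omegaS d *
    coneInt d (fun p => f p * g p * p.2 ^ β * (1 - p.2) ^ γ)

/-- The (classical) Jacobi basis polynomial `S_{m,Y}^{n,(β,γ)}` on the cone. -/
def coneS (d : ℕ) (β γ : ℝ) (n m : ℕ) (Y : Euc d → ℝ) : Euc d × ℝ → ℝ :=
  fun p => jacobiP (2 * m + β + d - 1) γ (n - m) (1 - 2 * p.2) * Y p.1

/-- The norm square `h_{n,m}^{β,γ}`. -/
def coneH (d : ℕ) (β γ : ℝ) (n m : ℕ) : ℝ :=
  poch (β + d) (2 * m) / poch (β + γ + d + 1) (2 * m) * hJac (2 * m + β + d - 1) γ (n - m)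

/-- The orthogonal projection `proj_n^{β,γ} f` built from an orthonormal spanning family of
solid harmonics. -/
def coneProj (d : ℕ) (N : ℕ → ℕ) (Y : (m : ℕ) → Fin (N m) → Euc d → ℝ) (β γ : ℝ) (n : ℕ)
    (f : Euc d × ℝ → ℝ) : Euc d × ℝ → ℝ :=
  fun p => ∑ m ∈ Finset.range (n + 1), ∑ ℓ : Fin (N m),
    coneInner d β γ f (coneS d β γ n m (Y m ℓ)) / coneH d β γ n m * coneS d β γ n m (Y m ℓ) p

/-- The Sobolev inner product `⟨f,g⟩_{β,-s}` on the conic surface. -/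
def coneSobInner (d : ℕ) (β : ℝ) (s : ℕ) (lam : ℕ → ℝ) (f g : Euc d × ℝ → ℝ) : ℝ :=
  (1 / omegaS d) * coneInt d (fun p => pdT s f p * pdT s g p * p.2 ^ (β + s)) +
    ∑ k ∈ Finset.range s, lam k / omegaS d *
      sphInt d (fun ξ => pdT k f (ξ, 1) * pdT k g (ξ, 1))

/-- The Sobolev basis polynomial `S_{m,Y}^{n,(β,-s)}` on the cone. -/
def coneSS (d : ℕ) (β : ℝ) (s n m : ℕ) (Y : Euc d → ℝ) : Euc d × ℝ → ℝ :=
  fun p => jacobiJneg (2 * m + β + d - 1) s (n - m) (1 - 2 * p.2) * Y p.1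

/-- The Sobolev norm square `h_{m,n}^{(β,-s)}`. -/
def coneSobH (d : ℕ) (β : ℝ) (s : ℕ) (lam : ℕ → ℝ) (n m : ℕ) : ℝ :=
  if n - m < s then 2 ^ (2 * (n - m)) * lam (n - m)
  else 2 ^ ((s : ℝ) - β - 2 * m - d) * hHat ((s : ℝ) + 2 * m + β + d - 1) 0 (n - m - s)

/-- The Sobolev orthogonal projection `proj_n^{β,-s} f`. -/
def coneSobProj (d : ℕ) (N : ℕ → ℕ) (Y : (m : ℕ) → Fin (N m) → Euc d → ℝ) (β : ℝ) (s : ℕ)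
    (lam : ℕ → ℝ) (n : ℕ) (f : Euc d × ℝ → ℝ) : Euc d × ℝ → ℝ :=
  fun p => ∑ m ∈ Finset.range (n + 1), ∑ ℓ : Fin (N m),
    coneSobInner d β s lam f (coneSS d β s n m (Y m ℓ)) / coneSobH d β s lam n m *
      coneSS d β s n m (Y m ℓ) p

/-- The spherical harmonic projection `Proj_k[g]` built from the orthonormal spanning family. -/
def sphProj (d : ℕ) (N : ℕ → ℕ) (Y : (m : ℕ) → Fin (N m) → Euc d → ℝ) (k : ℕ)
    (g : Euc d → ℝ) : Euc d → ℝ :=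
  fun x => ∑ ℓ : Fin (N k), (1 / omegaS d) * sphInt d (fun ξ => g ξ * Y k ℓ ξ) * Y k ℓ x

/-- Hypotheses: `(Y_ℓ^m)` is an orthonormal spanning family of solid harmonics. -/
def IsONBasisFamily (d : ℕ) (N : ℕ → ℕ) (Y : (m : ℕ) → Fin (N m) → Euc d → ℝ) : Prop :=
  (∀ m ℓ, IsSolidHarmonic d m (Y m ℓ)) ∧
  (∀ m (ℓ ℓ' : Fin (N m)),
    (1 / omegaS d) * sphInt d (fun ξ => Y m ℓ ξ * Y m ℓ' ξ) = if ℓ = ℓ' then 1 else 0) ∧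
  (∀ m (Z : Euc d → ℝ), IsSolidHarmonic d m Z →
    ∃ c : Fin (N m) → ℝ, ∀ x, Z x = ∑ ℓ : Fin (N m), c ℓ * Y m ℓ x)


section AuxPoly
open Polynomial

/-- raw antiderivative -/
def pint (p : ℝ[X]) : ℝ[X] := p.sum fun i a => C (a / (i+1)) * X ^ (i+1)

lemma derivative_pint (p : ℝ[X]) : (pint p).derivative = p := by
  unfold pint
  rw [Polynomial.sum_def, Polynomial.derivative_sum]
  conv_rhs => rw [← Polynomial.sum_C_mul_X_pow_eq p]
  rw [Polynomial.sum_def]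
  refine Finset.sum_congr rfl fun i _ => ?_
  rw [Polynomial.derivative_C_mul_X_pow]
  have h : ((i:ℝ)+1) ≠ 0 := by positivity
  simp only [Nat.add_sub_cancel]
  congr 1
  push_cast
  field_simp

def pAnti (p : ℝ[X]) : ℝ[X] := pint p - C ((pint p).eval (-1))

lemma derivative_pAnti (p : ℝ[X]) : (pAnti p).derivative = p := by
  simp [pAnti, derivative_pint]

lemma pAnti_eval_neg_one (p : ℝ[X]) : (pAnti p).eval (-1) = 0 := by simp [pAnti]

def iAnti (p : ℝ[X]) : ℕ → ℝ[X]
  | 0 => p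
  | j+1 => pAnti (iAnti p j)

lemma iAnti_succ_shift (p : ℝ[X]) (j : ℕ) : iAnti p (j+1) = iAnti (pAnti p) j := by
  induction j with
  | zero => rfl
  | succ j ih => rw [iAnti, ih]; rfl

lemma key_integral (j : ℕ) (p : ℝ[X]) (t : ℝ) :
    ∫ u in (-1:ℝ)..t, (t - u)^j / (j.factorial : ℝ) * p.eval u
      = (iAnti p (j+1)).eval t := by
  induction j generalizing p with
  | zero =>
      have h1 : ∀ u ∈ Set.uIcc (-1:ℝ) t, HasDerivAt (fun x => (pAnti p).eval x) (p.eval u) u := by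
        intro u _
        have := Polynomial.hasDerivAt (pAnti p) u
        rwa [derivative_pAnti] at this
      have h2 : IntervalIntegrable (fun u => p.eval u) MeasureTheory.volume (-1) t :=
        (Polynomial.continuous p).intervalIntegrable _ _
      have := intervalIntegral.integral_eq_sub_of_hasDerivAt h1 h2
      simp only [pow_zero, Nat.factorial_zero, Nat.cast_one, div_one, one_mul]
      rw [this, pAnti_eval_neg_one]
      simp [iAnti]
  | succ j ih =>
      have hu : ∀ x ∈ Set.uIcc (-1:ℝ) t, HasDerivAt (fun x => (t-x)^(j+1) / ((j+1).factorial : ℝ))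
          ((((j:ℝ)+1) * (t-x)^j * (-1)) / ((j+1).factorial : ℝ)) x := by
        intro x _
        have h0 : HasDerivAt (fun x : ℝ => t - x) (-1) x := (hasDerivAt_id x).const_sub t
        have h1 := (h0.pow (j+1)).div_const ((j+1).factorial : ℝ)
        simpa using h1
      have hv : ∀ x ∈ Set.uIcc (-1:ℝ) t, HasDerivAt (fun x => (pAnti p).eval x) (p.eval x) x := by
        intro x _
        have := Polynomial.hasDerivAt (pAnti p) x
        rwa [derivative_pAnti] at this
      have hu' : IntervalIntegrable (fun x => (((j:ℝ)+1) * (t-x)^j * (-1)) / ((j+1).factorial : ℝ))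
          MeasureTheory.volume (-1) t := by
        apply Continuous.intervalIntegrable; continuity
      have hv' : IntervalIntegrable (fun x => p.eval x) MeasureTheory.volume (-1) t :=
        (Polynomial.continuous p).intervalIntegrable _ _
      have H := intervalIntegral.integral_mul_deriv_eq_deriv_mul hu hv hu' hv'
      rw [H]
      have e1 : (t - t)^(j+1) / ((j+1).factorial : ℝ) = 0 := by simp
      rw [e1, pAnti_eval_neg_one, iAnti_succ_shift]
      have e2 : (fun x => (((j:ℝ)+1) * (t-x)^j * (-1)) / ((j+1).factorial : ℝ) * (pAnti p).eval x)
          = fun x => -((t-x)^j / ((j.factorial : ℝ)) * (pAnti p).eval x) := by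
        funext x
        have : ((j+1).factorial : ℝ) = ((j:ℝ)+1) * (j.factorial : ℝ) := by
          rw [Nat.factorial_succ]; push_cast; ring
        rw [this]
        have hj : ((j:ℝ)+1) ≠ 0 := by positivity
        have hf : (j.factorial : ℝ) ≠ 0 := by positivity
        field_simp
      rw [e2, intervalIntegral.integral_neg, ih (pAnti p)]
      ring

lemma iterate_derivative_iAnti (p : ℝ[X]) (j k : ℕ) (h : k ≤ j) :
    derivative^[k] (iAnti p j) = iAnti p (j - k) := by
  induction k with
  | zero => simp
  | succ k ih =>
      rw [Function.iterate_succ_apply', ih (by omega)]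
      have hj : j - k = (j - (k+1)) + 1 := by omega
      rw [hj, iAnti, derivative_pAnti]

lemma iAnti_eval_neg_one (p : ℝ[X]) (j : ℕ) (h : 1 ≤ j) : (iAnti p j).eval (-1) = 0 := by
  obtain ⟨i, rfl⟩ : ∃ i, j = i + 1 := ⟨j - 1, by omega⟩
  rw [iAnti, pAnti_eval_neg_one]

def Lpoly : ℝ[X] := C 1 - C 2 * X

lemma Lpoly_eval (τ : ℝ) : Lpoly.eval τ = 1 - 2 * τ := by simp [Lpoly]

lemma iterate_derivative_comp_L (p : ℝ[X]) (k : ℕ) :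
    derivative^[k] (p.comp Lpoly) = C ((-2:ℝ)^k) * ((derivative^[k] p).comp Lpoly) := by
  induction k with
  | zero => simp
  | succ k ih =>
      rw [Function.iterate_succ_apply', ih, Polynomial.derivative_C_mul,
        Polynomial.derivative_comp]
      have hL : derivative Lpoly = C (-2:ℝ) := by
        have : (C (-2:ℝ)) = -(C 2 * 1) := by rw [mul_one, Polynomial.C_neg]
        rw [this]
        simp [Lpoly]
      rw [hL, Function.iterate_succ_apply', pow_succ, Polynomial.C_mul]
      ring

lemma iteratedDeriv_poly (k : ℕ) (p : ℝ[X]) :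
    iteratedDeriv k (fun x => p.eval x) = fun x => (derivative^[k] p).eval x := by
  induction k generalizing p with
  | zero => simp
  | succ k ih =>
      rw [iteratedDeriv_succ']
      have : deriv (fun x => p.eval x) = fun x => (derivative p).eval x := by
        funext x; exact Polynomial.deriv p
      rw [this, ih, Function.iterate_succ_apply]

def pJacobi (a b : ℝ) (n : ℕ) : ℝ[X] :=
  C (poch (a+1) n / (n.factorial : ℝ)) *
    ∑ k ∈ Finset.range (n+1),
      C (poch (-(n:ℝ)) k * poch ((n:ℝ)+a+b+1) k / ((k.factorial : ℝ) * poch (a+1) k)) *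
        (C (2⁻¹) * (C 1 - X)) ^ k

lemma pJacobi_eval (a b : ℝ) (n : ℕ) (t : ℝ) : (pJacobi a b n).eval t = jacobiP a b n t := by
  unfold pJacobi jacobiP
  rw [eval_mul, eval_C, eval_finset_sum]
  congr 1
  refine Finset.sum_congr rfl fun k _ => ?_
  simp only [eval_mul, eval_C, eval_pow, eval_sub, eval_one, eval_X]
  ring

def pJhat (a : ℝ) (k : ℕ) : ℝ[X] := C (jacobiA a 0 k) * pJacobi a 0 k

lemma pJhat_eval (a : ℝ) (k : ℕ) (t : ℝ) : (pJhat a k).eval t = jacobiPhat a 0 k t := by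
  rw [pJhat, eval_mul, eval_C, pJacobi_eval, jacobiPhat]

def pJJ (a : ℝ) (s k : ℕ) : ℝ[X] :=
  if k < s then C ((k.factorial : ℝ)⁻¹) * (C 2 - C 2 * X) ^ k
  else (iAnti (pJhat (a + s) (k - s)) s).comp Lpoly

lemma pJJ_eval (a : ℝ) (s k : ℕ) (hs : 1 ≤ s) (τ : ℝ) :
    (pJJ a s k).eval τ = jacobiJneg a s k (1 - 2*τ) := by
  unfold pJJ jacobiJneg jacobiJ
  by_cases h : k < s
  · rw [if_pos h, if_pos h]
    simp only [eval_mul, eval_C, eval_pow, eval_sub, eval_X]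
    rw [show (1:ℝ) + (1 - 2*τ) = 2 - 2*τ by ring, div_eq_inv_mul]
  · rw [if_neg h, if_neg h]
    have hP : (fun u => (1 - 2*τ - u) ^ (s-1) / ((s-1).factorial : ℝ)
          * jacobiPhat (a + ↑s) 0 (k - s) u)
        = fun u => (1 - 2*τ - u) ^ (s-1) / ((s-1).factorial : ℝ)
          * (pJhat (a + ↑s) (k - s)).eval u := by
      funext u; rw [pJhat_eval]
    rw [hP, key_integral (s-1) (pJhat (a + ↑s) (k - s)) (1 - 2*τ)]
    rw [show s - 1 + 1 = s by omega]
    rw [eval_comp, Lpoly_eval]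

lemma pJJ_deriv_top (a : ℝ) (s k : ℕ) (hk : s ≤ k) :
    derivative^[s] (pJJ a s k) = C ((-2:ℝ)^s) * (pJhat (a + s) (k - s)).comp Lpoly := by
  unfold pJJ
  rw [if_neg (by omega), iterate_derivative_comp_L, iterate_derivative_iAnti _ s s le_rfl]
  rw [Nat.sub_self]
  rfl

lemma pJJ_deriv_low (a : ℝ) (s k : ℕ) (hk : k < s) : derivative^[s] (pJJ a s k) = 0 := by
  unfold pJJ
  rw [if_pos hk]
  apply Polynomial.iterate_derivative_eq_zero
  have h1 : (C (2:ℝ) - C 2 * X).natDegree ≤ 1 := by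
    refine le_trans (Polynomial.natDegree_sub_le _ _) ?_
    simp only [Polynomial.natDegree_C, max_le_iff]
    constructor
    · omega
    · exact le_trans (Polynomial.natDegree_mul_le) (by simp)
  have h2 : ((C (2:ℝ) - C 2 * X) ^ k).natDegree ≤ k := by
    refine le_trans (Polynomial.natDegree_pow_le) ?_
    calc k * (C (2:ℝ) - C 2 * X).natDegree ≤ k * 1 := Nat.mul_le_mul_left k h1
    _ = k := by omega
  have h3 := Polynomial.natDegree_mul_le
    (p := C ((k.factorial : ℝ)⁻¹)) (q := (C (2:ℝ) - C 2 * X) ^ k)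
  simp only [Polynomial.natDegree_C, Nat.zero_add] at h3
  omega

lemma pJJ_boundary (a : ℝ) (s k j : ℕ) (hk : s ≤ k) (hj : j < s) :
    (derivative^[j] (pJJ a s k)).eval 1 = 0 := by
  unfold pJJ
  rw [if_neg (by omega), iterate_derivative_comp_L,
    iterate_derivative_iAnti _ s j (le_of_lt hj), eval_mul, eval_C, eval_comp, Lpoly_eval]
  rw [show (1:ℝ) - 2*1 = -1 by norm_num, iAnti_eval_neg_one _ _ (by omega), mul_zero]

lemma pdT_coneSS (d : ℕ) (β : ℝ) (s n m : ℕ) (hs : 1 ≤ s) (Yf : Euc d → ℝ) (j : ℕ)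
    (x : Euc d) (t : ℝ) :
    pdT j (coneSS d β s n m Yf) (x, t)
      = (derivative^[j] (pJJ (2*m+β+d-1) s (n-m))).eval t * Yf x := by
  have h0 : pdT j (coneSS d β s n m Yf) (x, t)
      = iteratedDeriv j (fun τ => coneSS d β s n m Yf (x, τ)) t := rfl
  rw [h0]
  have h1 : (fun τ => coneSS d β s n m Yf (x, τ))
      = fun τ => (C (Yf x) * pJJ (2*↑m+β+↑d-1) s (n-m)).eval τ := by
    funext τ
    simp only [coneSS]
    rw [eval_mul, eval_C, pJJ_eval _ _ _ hs]
    ring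
  rw [h1, iteratedDeriv_poly, Polynomial.iterate_derivative_C_mul]
  simp only [eval_mul, eval_C]
  ring

lemma pdT_coneSS' (d : ℕ) (β : ℝ) (s n m : ℕ) (hs : 1 ≤ s) (Yf : Euc d → ℝ) (j : ℕ)
    (p : Euc d × ℝ) :
    pdT j (coneSS d β s n m Yf) p
      = (derivative^[j] (pJJ (2*m+β+d-1) s (n-m))).eval p.2 * Yf p.1 :=
  pdT_coneSS d β s n m hs Yf j p.1 p.2

lemma coneInt_const_mul (d : ℕ) (c : ℝ) (g : Euc d × ℝ → ℝ) :
    coneInt d (fun p => c * g p) = c * coneInt d g := by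
  unfold coneInt sphInt
  rw [← intervalIntegral.integral_const_mul]
  refine intervalIntegral.integral_congr fun t _ => ?_
  rw [MeasureTheory.integral_const_mul]
  ring

lemma poch_pos {x : ℝ} (hx : 0 < x) (k : ℕ) : 0 < poch x k := by
  induction k with
  | zero => simp [poch]
  | succ k ih =>
      unfold poch at ih ⊢
      rw [ascPochhammer_succ_eval]
      have hxk : (0:ℝ) < x + k := by positivity
      exact mul_pos ih hxk

lemma poch_succ_right (x : ℝ) (k : ℕ) : poch x (k+1) = poch x k * (x + k) := by
  unfold poch; rw [ascPochhammer_succ_eval]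

lemma poch_succ_left (x : ℝ) (k : ℕ) : poch x (k+1) = x * poch (x+1) k := by
  unfold poch
  rw [ascPochhammer_succ_left]
  simp [Polynomial.eval_comp]

lemma cconst_zero {y : ℝ} (hy : 0 < y + 1) : cconst y 0 = y + 1 := by
  unfold cconst
  rw [show y + 0 + 2 = (y+1)+1 from by ring, Real.Gamma_add_one (ne_of_gt hy),
    show (0:ℝ) + 1 = 1 from by ring, Real.Gamma_one]
  have h3 : Real.Gamma (y+1) ≠ 0 := ne_of_gt (Real.Gamma_pos_of_pos hy)
  field_simp

end AuxPoly

open Polynomial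

/-- `∂_t^s proj_n^{β,-s} f = proj_{n-s}^{β+s,0}(∂_t^s f)` for `n ≥ s`. -/
theorem pdT_coneSobProj (d : ℕ) (hd : 2 ≤ d) (s : ℕ) (hs : 1 ≤ s) (β : ℝ)
    (hβ : -(d : ℝ) - s < β) (lam : ℕ → ℝ) (hlam : ∀ k, k ≤ s - 1 → 0 < lam k)
    (N : ℕ → ℕ) (Y : (m : ℕ) → Fin (N m) → Euc d → ℝ) (hY : IsONBasisFamily d N Y)
    (f : Euc d × ℝ → ℝ) (hf : ContDiff ℝ s f)
    (n : ℕ) (hn : s ≤ n) (x : Euc d) (t : ℝ) :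
    pdT s (coneSobProj d N Y β s lam n f) (x, t)
      = coneProj d N Y (β + s) 0 (n - s) (pdT s f) (x, t) := by
  have hL : pdT s (coneSobProj d N Y β s lam n f) (x, t)
      = ∑ m ∈ Finset.range (n+1), ∑ ℓ : Fin (N m),
          coneSobInner d β s lam f (coneSS d β s n m (Y m ℓ)) / coneSobH d β s lam n m
            * ((derivative^[s] (pJJ (2*m+β+d-1) s (n-m))).eval t * Y m ℓ x) := by
    have h0 : pdT s (coneSobProj d N Y β s lam n f) (x, t)
        = iteratedDeriv s (fun τ => coneSobProj d N Y β s lam n f (x, τ)) t := rfl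
    have h1 : (fun τ => coneSobProj d N Y β s lam n f (x, τ))
        = fun τ => (∑ m ∈ Finset.range (n+1), ∑ ℓ : Fin (N m),
            C (coneSobInner d β s lam f (coneSS d β s n m (Y m ℓ)) / coneSobH d β s lam n m
              * Y m ℓ x) * pJJ (2*m+β+d-1) s (n-m)).eval τ := by
      funext τ
      simp only [coneSobProj, coneSS, eval_finset_sum, eval_mul, eval_C]
      refine Finset.sum_congr rfl fun m _ => Finset.sum_congr rfl fun ℓ _ => ?_
      rw [pJJ_eval _ _ _ hs]
      ring
    rw [h0, h1, iteratedDeriv_poly]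
    simp only [Polynomial.iterate_derivative_sum, eval_finset_sum,
      Polynomial.iterate_derivative_C_mul, eval_mul, eval_C]
    refine Finset.sum_congr rfl fun m _ => Finset.sum_congr rfl fun ℓ _ => ?_
    ring
  have hsub : Finset.range (n-s+1) ⊆ Finset.range (n+1) := by
    intro y hy; simp only [Finset.mem_range] at *; omega
  have hvan : ∀ m ∈ Finset.range (n+1), m ∉ Finset.range (n-s+1) →
      (∑ ℓ : Fin (N m),
        coneSobInner d β s lam f (coneSS d β s n m (Y m ℓ)) / coneSobH d β s lam n m
          * ((derivative^[s] (pJJ (2*m+β+d-1) s (n-m))).eval t * Y m ℓ x)) = 0 := by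
    intro m hm hm'
    have hms : n - m < s := by
      simp only [Finset.mem_range] at hm hm'; omega
    rw [pJJ_deriv_low _ _ _ hms]
    simp
  rw [hL, ← Finset.sum_subset hsub hvan]
  simp only [coneProj]
  refine Finset.sum_congr rfl fun m hm => ?_
  have hms : s ≤ n - m := by simp only [Finset.mem_range] at hm; omega
  refine Finset.sum_congr rfl fun ℓ _ => ?_
  have hm0 : (0:ℝ) ≤ 2*(m:ℝ) := by positivity
  have hk0 : (0:ℝ) ≤ ((n-m-s : ℕ):ℝ) := Nat.cast_nonneg _
  have hs0 : (0:ℝ) ≤ (s:ℝ) := Nat.cast_nonneg _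
  have hx0 : (0:ℝ) < β + ↑s + ↑d := by linarith [hβ]
  have hderiv : ∀ τ₀ : ℝ, (derivative^[s] (pJJ (2*m+β+d-1) s (n-m))).eval τ₀
      = (-2:ℝ)^s * (jacobiA ((s:ℝ)+2*↑m+β+↑d-1) 0 (n-m-s)
          * jacobiP ((s:ℝ)+2*↑m+β+↑d-1) 0 (n-m-s) (1 - 2*τ₀)) := by
    intro τ₀
    rw [pJJ_deriv_top _ s (n-m) hms, eval_mul, eval_C, eval_comp, Lpoly_eval, pJhat_eval]
    rw [show 2*(m:ℝ)+β+↑d-1+↑s = (s:ℝ)+2*↑m+β+↑d-1 from by ring]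
    unfold jacobiPhat
    rfl
  have hIeq : coneSobInner d β s lam f (coneSS d β s n m (Y m ℓ))
      = 1/omegaS d * (((-2:ℝ)^s * jacobiA ((s:ℝ)+2*↑m+β+↑d-1) 0 (n-m-s)) *
          coneInt d (fun p => pdT s f p *
            (jacobiP ((s:ℝ)+2*↑m+β+↑d-1) 0 (n-m-s) (1 - 2*p.2) * Y m ℓ p.1) * p.2 ^ (β+↑s))) := by
    unfold coneSobInner
    have hzero : ∀ kk ∈ Finset.range s, lam kk / omegaS d *
        sphInt d (fun ξ => pdT kk f (ξ,1) * pdT kk (coneSS d β s n m (Y m ℓ)) (ξ,1)) = 0 := by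
      intro kk hkk
      have h2 : (fun ξ : Euc d => pdT kk f (ξ,1) * pdT kk (coneSS d β s n m (Y m ℓ)) (ξ,1))
          = fun _ => (0:ℝ) := by
        funext ξ
        rw [pdT_coneSS d β s n m hs (Y m ℓ) kk ξ 1,
          pJJ_boundary _ s (n-m) kk hms (Finset.mem_range.mp hkk), zero_mul, mul_zero]
      rw [h2]
      unfold sphInt
      simp
    rw [Finset.sum_eq_zero hzero, add_zero]
    have h3 : (fun p : Euc d × ℝ => pdT s f p * pdT s (coneSS d β s n m (Y m ℓ)) p * p.2 ^ (β+↑s))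
        = fun p => ((-2:ℝ)^s * jacobiA ((s:ℝ)+2*↑m+β+↑d-1) 0 (n-m-s)) *
            (pdT s f p * (jacobiP ((s:ℝ)+2*↑m+β+↑d-1) 0 (n-m-s) (1 - 2*p.2) * Y m ℓ p.1)
              * p.2 ^ (β+↑s)) := by
      funext p
      rw [pdT_coneSS' d β s n m hs (Y m ℓ) s p, hderiv p.2]
      ring
    rw [h3, coneInt_const_mul]
  have hconeS : ∀ p : Euc d × ℝ, coneS d (β+↑s) 0 (n-s) m (Y m ℓ) p
      = jacobiP ((s:ℝ)+2*↑m+β+↑d-1) 0 (n-m-s) (1 - 2*p.2) * Y m ℓ p.1 := by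
    intro p
    simp only [coneS]
    rw [show 2*(m:ℝ)+(β+↑s)+↑d-1 = (s:ℝ)+2*↑m+β+↑d-1 from by ring,
      show n - s - m = n-m-s from by omega]
  have hRinner : coneInner d (β+↑s) 0 (pdT s f) (coneS d (β+↑s) 0 (n-s) m (Y m ℓ))
      = cconst (β+↑s+↑d-1) 0 / omegaS d *
          coneInt d (fun p => pdT s f p *
            (jacobiP ((s:ℝ)+2*↑m+β+↑d-1) 0 (n-m-s) (1 - 2*p.2) * Y m ℓ p.1) * p.2 ^ (β+↑s)) := by
    unfold coneInner
    congr 1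
    refine congrArg (coneInt d) ?_
    funext p
    rw [hconeS p, Real.rpow_zero, mul_one]
  have hcc : cconst (β+↑s+↑d-1) 0 = β+↑s+↑d := by
    rw [cconst_zero (by linarith)]; ring
  have hcc2 : cconst ((s:ℝ)+2*↑m+β+↑d-1) 0 = (s:ℝ)+2*↑m+β+↑d := by
    rw [cconst_zero (by linarith)]; ring
  have hA' : 0 < jacobiA ((s:ℝ)+2*↑m+β+↑d-1) 0 (n-m-s) := by
    unfold jacobiA
    exact div_pos (by positivity) (poch_pos (by linarith) _)
  have hfacpos : (0:ℝ) < ((n-m-s).factorial : ℝ) := by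
    exact_mod_cast Nat.factorial_pos _
  have hh' : 0 < hJac ((s:ℝ)+2*↑m+β+↑d-1) 0 (n-m-s) := by
    unfold hJac
    apply div_pos
    · exact mul_pos (mul_pos (poch_pos (by linarith) _) (poch_pos (by norm_num) _))
        (by linarith)
    · exact mul_pos (mul_pos hfacpos (poch_pos (by linarith) _)) (by linarith)
  have hHc : 0 < coneH d (β+↑s) 0 (n-s) m := by
    unfold coneH
    rw [show 2*(m:ℝ)+(β+↑s)+↑d-1 = (s:ℝ)+2*↑m+β+↑d-1 from by ring,
      show n - s - m = n-m-s from by omega]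
    exact mul_pos (div_pos (poch_pos (by linarith) _) (poch_pos (by linarith) _)) hh'
  have hpoch : poch (β+↑s+↑d) (2*m) * ((β+↑s+↑d) + ((2*m : ℕ):ℝ))
      = (β+↑s+↑d) * poch ((β+↑s+↑d)+1) (2*m) := by
    rw [← poch_succ_right, ← poch_succ_left]
  have hkey : ((-2:ℝ)^s * jacobiA ((s:ℝ)+2*↑m+β+↑d-1) 0 (n-m-s))^2 * coneH d (β+↑s) 0 (n-s) m
      = cconst (β+↑s+↑d-1) 0 * coneSobH d β s lam n m := by
    unfold coneH coneSobH hHat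
    rw [if_neg (by omega)]
    rw [show 2*(m:ℝ)+(β+↑s)+↑d-1 = (s:ℝ)+2*↑m+β+↑d-1 from by ring,
      show n - s - m = n-m-s from by omega, hcc, hcc2]
    have hpow : (2:ℝ) ^ ((s:ℝ) - β - 2*↑m - ↑d) * 2 ^ ((s:ℝ)+2*↑m+β+↑d)
        = (4:ℝ)^s := by
      rw [← Real.rpow_add (by norm_num : (0:ℝ) < 2),
        show (s:ℝ) - β - 2*↑m - ↑d + ((s:ℝ)+2*↑m+β+↑d) = ((2*s : ℕ) : ℝ) from by
          push_cast; ring,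
        Real.rpow_natCast, pow_mul]
      norm_num
    rw [show β+↑s+(0:ℝ)+↑d+1 = (β+↑s+↑d)+1 from by ring]
    have hsq : ((-2:ℝ)^s)^2 = 4^s := by
      rw [← pow_mul, mul_comm s 2, pow_mul]; norm_num
    have hp1 : poch ((β+↑s+↑d)+1) (2*m) ≠ 0 := ne_of_gt (poch_pos (by linarith) _)
    have hD : ((s:ℝ)+2*↑m+β+↑d) ≠ 0 := by linarith
    push_cast at hpoch
    rw [mul_pow, hsq]
    rw [show (s:ℝ)+2*↑m+β+↑d-1+0+1 = (s:ℝ)+2*↑m+β+↑d from by ring]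
    field_simp
    linear_combination ((4:ℝ)^s) * hpoch
      - ((β+↑s+↑d)
        * poch ((β+↑s+↑d)+1) (2*m)) * hpow
  have hc1A : ((-2:ℝ)^s * jacobiA ((s:ℝ)+2*↑m+β+↑d-1) 0 (n-m-s))^2 ≠ 0 :=
    pow_ne_zero _ (mul_ne_zero (pow_ne_zero _ (by norm_num)) (ne_of_gt hA'))
  have hHs : coneSobH d β s lam n m ≠ 0 := by
    intro h0
    rw [h0, mul_zero] at hkey
    exact (mul_ne_zero hc1A (ne_of_gt hHc)) hkey
  have hdiv : ((-2:ℝ)^s * jacobiA ((s:ℝ)+2*↑m+β+↑d-1) 0 (n-m-s))^2 / coneSobH d β s lam n m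
      = cconst (β+↑s+↑d-1) 0 / coneH d (β+↑s) 0 (n-s) m := by
    rw [div_eq_div_iff hHs (ne_of_gt hHc)]
    exact hkey
  have hconeSxt : coneS d (β+↑s) 0 (n-s) m (Y m ℓ) (x,t)
      = jacobiP ((s:ℝ)+2*↑m+β+↑d-1) 0 (n-m-s) (1 - 2*t) * Y m ℓ x := hconeS (x,t)
  rw [hIeq, hderiv t, hRinner, hconeSxt]
  generalize coneInt d (fun p => pdT s f p *
      (jacobiP ((s:ℝ)+2*↑m+β+↑d-1) 0 (n-m-s) (1 - 2*p.2) * Y m ℓ p.1) * p.2 ^ (β+↑s)) = I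
  linear_combination (1/omegaS d * I *
    jacobiP ((s:ℝ)+2*↑m+β+↑d-1) 0 (n-m-s) (1 - 2*t) * Y m ℓ x) * hdiv

end
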